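/- Let (X_n)_{n≥1} be i.i.d. nonnegative bounded random variables with P(X_1 = 0) = 0 and ln X_1 integrable, let (a_n)_{n≥0} be a sequence of complex numbers, and let γ = liminf_{n→∞} |a_n|^{−1/n} be the radius of convergence of ∑ a_n z^n. Set w_n = X_1 X_2 ⋯ X_n (w_0 = 1) and S(ω) = ∑_{n≥0} |a_n|² w_n(ω)². Then: (a) if γ < exp(E[ln X_1]), then P(S < ∞) = 0; (b) if γ > exp(E[ln X_1]), then P(S < ∞) = 1; (c) for 1 ≤ p < ∞, if γ < (E[X_1^p])^{1/p} then E[S^{p/2}] = ∞, and if γ > (E[X_1^p])^{1/p} then E[S^{p/2}] < ∞. -/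

import Mathlib

open MeasureTheory ProbabilityTheory Filter

noncomputable section

/-- `ℓ²(ℕ, ℂ)`, the separable complex Hilbert space. -/
abbrev Hil : Type := lp (fun _ : ℕ => ℂ) 2

/-- The orthonormal basis `(e_n)` of `ℓ²(ℕ, ℂ)` (0-indexed: `el n` is the paper's `e_{n+1}`). -/
def el (n : ℕ) : Hil := lp.single 2 n 1

/-- The essential range of a real random variable: the set of `y` such that
`P(|f - y| < ε) > 0` for every `ε > 0`. -/
def essRange {Ω : Type*} [MeasurableSpace Ω] (P : Measure Ω) (f : Ω → ℝ) : Set ℝ :=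
  {y : ℝ | ∀ ε > 0, 0 < P {ω | |f ω - y| < ε}}

open scoped ENNReal

section AuxiliaryLemmas
open Topology

-- real rpow comparison
private lemma aux_lt_iff {x t : ℝ} (hx : 0 < x) (ht : 0 < t) {n : ℕ} (hn : 1 ≤ n) :
    x ^ (-(1:ℝ)/(n:ℝ)) < t ↔ (t ^ n)⁻¹ < x := by
  have hn0 : (n:ℝ) ≠ 0 := Nat.cast_ne_zero.mpr (by omega)
  have key : (x ^ (-(1:ℝ)/(n:ℝ))) ^ n = x⁻¹ := by
    rw [← Real.rpow_natCast (x ^ (-(1:ℝ)/(n:ℝ))) n, ← Real.rpow_mul hx.le]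
    rw [div_mul_cancel₀ _ hn0, Real.rpow_neg_one]
  rw [← pow_lt_pow_iff_left₀ (Real.rpow_nonneg hx.le _) ht.le (by omega : n ≠ 0), key]
  rw [inv_lt_comm₀ hx (pow_pos ht n)]

private lemma aux_lt_iff' {x t : ℝ} (hx : 0 < x) (ht : 0 < t) {n : ℕ} (hn : 1 ≤ n) :
    t < x ^ (-(1:ℝ)/(n:ℝ)) ↔ x < (t ^ n)⁻¹ := by
  have hn0 : (n:ℝ) ≠ 0 := Nat.cast_ne_zero.mpr (by omega)
  have key : (x ^ (-(1:ℝ)/(n:ℝ))) ^ n = x⁻¹ := by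
    rw [← Real.rpow_natCast (x ^ (-(1:ℝ)/(n:ℝ))) n, ← Real.rpow_mul hx.le]
    rw [div_mul_cancel₀ _ hn0, Real.rpow_neg_one]
  rw [← pow_lt_pow_iff_left₀ ht.le (Real.rpow_nonneg hx.le _) (by omega : n ≠ 0), key]
  rw [lt_inv_comm₀ (pow_pos ht n) hx]

-- pow/rpow algebra: ((t^n)⁻¹)^p * m^n = (m / t^p)^n
private lemma aux_alg {t m : ℝ} (ht : 0 < t) (hm : 0 ≤ m) (p : ℝ) (n : ℕ) :
    ((t ^ n)⁻¹) ^ p * m ^ n = (m / t ^ p) ^ n := by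
  have h1 : ((t ^ n : ℝ)) ^ p = (t ^ p) ^ n := by
    rw [← Real.rpow_natCast t n, ← Real.rpow_mul ht.le, mul_comm ((n:ℝ)) p,
      Real.rpow_mul ht.le, Real.rpow_natCast]
  rw [Real.inv_rpow (pow_nonneg ht.le n), h1, div_pow, div_eq_inv_mul]

-- extraction from liminf: frequent lower bounds on |a n|
private lemma aux_freq {a : ℕ → ℂ} {γ : ℝ≥0∞}
    (hγ : γ = Filter.liminf
      (fun n : ℕ => ENNReal.ofReal (‖a n‖) ^ (-(1 : ℝ) / (n : ℝ))) atTop)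
    {b : ℝ} (h : γ < ENNReal.ofReal b) :
    ∃ t : ℝ, 0 < t ∧ t < b ∧ ∃ᶠ n in atTop, 1 ≤ n ∧ (t ^ n)⁻¹ < ‖a n‖ := by
  obtain ⟨z, hz1, hz2⟩ := exists_between h
  have hzt : z ≠ ⊤ := hz2.ne_top
  have hz0 : 0 < z := zero_le.trans_lt hz1
  set t := z.toReal with htdef
  have ht0 : 0 < t := ENNReal.toReal_pos hz0.ne' hzt
  have htb : t < b := by
    rw [← ENNReal.lt_ofReal_iff_toReal_lt hzt]; exact hz2
  refine ⟨t, ht0, htb, ?_⟩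
  have h1 : ∃ᶠ n in atTop,
      (ENNReal.ofReal (‖a n‖) ^ (-(1 : ℝ) / (n : ℝ))) < z := by
    exact frequently_lt_of_liminf_lt (by isBoundedDefault) (hγ ▸ hz1)
  refine (h1.and_eventually (eventually_ge_atTop 1)).mono ?_
  rintro n ⟨hun, hn⟩
  refine ⟨hn, ?_⟩
  have hRpos : 0 < ‖a n‖ := by
    rcases (norm_nonneg (a n)).lt_or_eq with h' | h'
    · exact h'
    · exfalso
      rw [← h', ENNReal.ofReal_zero, ENNReal.zero_rpow_of_neg (by
        rw [div_neg_iff]; right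
        constructor
        · norm_num
        · exact_mod_cast Nat.cast_pos.mpr (by omega))] at hun
      exact (not_top_lt (hun.trans_le le_top)).elim
  rw [ENNReal.ofReal_rpow_of_pos hRpos, ← ENNReal.ofReal_toReal hzt, ← htdef,
    ENNReal.ofReal_lt_ofReal_iff ht0] at hun
  exact (aux_lt_iff hRpos ht0 hn).mp hun

-- extraction from liminf: eventual upper bounds on |a n|
private lemma aux_ev {a : ℕ → ℂ} {γ : ℝ≥0∞}
    (hγ : γ = Filter.liminf
      (fun n : ℕ => ENNReal.ofReal (‖a n‖) ^ (-(1 : ℝ) / (n : ℝ))) atTop)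
    {b : ℝ} (hb : 0 ≤ b) (h : ENNReal.ofReal b < γ) :
    ∃ t : ℝ, 0 < t ∧ b < t ∧ ∀ᶠ n in atTop, ‖a n‖ < (t ^ n)⁻¹ := by
  obtain ⟨z, hz1, hz2⟩ := exists_between h
  have hzt : z ≠ ⊤ := hz2.ne_top
  have hz0 : 0 < z := zero_le.trans_lt hz1
  set t := z.toReal with htdef
  have ht0 : 0 < t := ENNReal.toReal_pos hz0.ne' hzt
  have htb : b < t := by
    rw [← ENNReal.ofReal_lt_iff_lt_toReal hb hzt]; exact hz1
  refine ⟨t, ht0, htb, ?_⟩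
  have h1 : ∀ᶠ n in atTop,
      z < (ENNReal.ofReal (‖a n‖) ^ (-(1 : ℝ) / (n : ℝ))) := by
    exact eventually_lt_of_lt_liminf (hγ ▸ hz2)
  filter_upwards [h1, eventually_ge_atTop 1] with n hun hn
  rcases (norm_nonneg (a n)).lt_or_eq with hRpos | h'
  · rw [ENNReal.ofReal_rpow_of_pos hRpos, ← ENNReal.ofReal_toReal hzt, ← htdef,
      ENNReal.ofReal_lt_ofReal_iff (Real.rpow_pos_of_pos hRpos _)] at hun
    exact (aux_lt_iff' hRpos ht0 hn).mp hun
  · rw [← h']; exact inv_pos.mpr (pow_pos ht0 n)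
-- growth of products along a trajectory
private lemma aux_grow_up {x : ℕ → ℝ} {μ c : ℝ} (hpos : ∀ i, 0 < x i)
    (htend : Tendsto (fun n : ℕ => (∑ i ∈ Finset.range n, Real.log (x i)) / n) atTop (𝓝 μ))
    (hc : Real.exp μ < c) :
    ∀ᶠ n in atTop, ∏ i ∈ Finset.range n, x i ≤ c ^ n := by
  have hc0 : 0 < c := (Real.exp_pos μ).trans hc
  have hlog : μ < Real.log c := (Real.lt_log_iff_exp_lt hc0).mpr hc
  filter_upwards [htend.eventually_lt_const hlog, eventually_ge_atTop 1] with n havg hn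
  have hnpos : (0:ℝ) < n := by exact_mod_cast Nat.pos_of_ne_zero (by omega)
  have hsum : (∑ i ∈ Finset.range n, Real.log (x i)) < Real.log c * n := by
    rw [div_lt_iff₀ hnpos] at havg; exact havg
  have hprod : ∏ i ∈ Finset.range n, x i
      = Real.exp (∑ i ∈ Finset.range n, Real.log (x i)) := by
    rw [Real.exp_sum]
    exact (Finset.prod_congr rfl fun i _ => (Real.exp_log (hpos i)).symm)
  rw [hprod]
  calc Real.exp (∑ i ∈ Finset.range n, Real.log (x i))
      ≤ Real.exp (Real.log c * n) := Real.exp_le_exp.mpr hsum.le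
    _ = c ^ n := by rw [mul_comm, Real.exp_nat_mul, Real.exp_log hc0]

private lemma aux_grow_down {x : ℕ → ℝ} {μ c : ℝ} (hpos : ∀ i, 0 < x i)
    (htend : Tendsto (fun n : ℕ => (∑ i ∈ Finset.range n, Real.log (x i)) / n) atTop (𝓝 μ))
    (hc0 : 0 < c) (hc : c < Real.exp μ) :
    ∀ᶠ n in atTop, c ^ n ≤ ∏ i ∈ Finset.range n, x i := by
  have hlog : Real.log c < μ := (Real.log_lt_iff_lt_exp hc0).mpr hc
  filter_upwards [htend.eventually_const_lt hlog, eventually_ge_atTop 1] with n havg hn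
  have hnpos : (0:ℝ) < n := by exact_mod_cast Nat.pos_of_ne_zero (by omega)
  have hsum : Real.log c * n < (∑ i ∈ Finset.range n, Real.log (x i)) := by
    rw [lt_div_iff₀ hnpos] at havg; exact havg
  have hprod : ∏ i ∈ Finset.range n, x i
      = Real.exp (∑ i ∈ Finset.range n, Real.log (x i)) := by
    rw [Real.exp_sum]
    exact (Finset.prod_congr rfl fun i _ => (Real.exp_log (hpos i)).symm)
  rw [hprod]
  calc c ^ n = Real.exp (Real.log c * n) := by rw [mul_comm, Real.exp_nat_mul, Real.exp_log hc0]
    _ ≤ Real.exp (∑ i ∈ Finset.range n, Real.log (x i)) := Real.exp_le_exp.mpr hsum.le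
-- moment of products via independence
private lemma aux_moment {Ω : Type*} [MeasurableSpace Ω] (P : Measure Ω) [IsProbabilityMeasure P]
    (X : ℕ → Ω → ℝ) (C : ℝ)
    (hmeas : ∀ n, Measurable (X n))
    (hbdd : ∀ n ω, 0 ≤ X n ω ∧ X n ω ≤ C)
    (hindep : iIndepFun X P)
    (hident : ∀ n, IdentDistrib (X n) (X 0) P P)
    {p : ℝ} (hp : 0 < p) (n : ℕ) :
    ∫⁻ ω, ENNReal.ofReal ((∏ i ∈ Finset.range n, X i ω) ^ p) ∂P
      = (ENNReal.ofReal (∫ ω, X 0 ω ^ p ∂P)) ^ n := by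
  have hφ : Measurable (fun x : ℝ => ENNReal.ofReal (x ^ p)) :=
    (measurable_id.pow_const p).ennreal_ofReal
  have hC0 : 0 ≤ C := by
    have hne : (Set.univ : Set Ω).Nonempty := by
      by_contra h
      rw [Set.not_nonempty_iff_eq_empty] at h
      have := measure_univ (μ := P)
      rw [h, measure_empty] at this
      exact zero_ne_one this
    obtain ⟨ω₀, -⟩ := hne
    exact le_trans (hbdd 0 ω₀).1 (hbdd 0 ω₀).2
  have hint0 : Integrable (fun ω => X 0 ω ^ p) P := by
    refine Integrable.mono' (integrable_const (C ^ p))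
      ((hmeas 0).pow_const p).aestronglyMeasurable ?_
    filter_upwards with ω
    rw [Real.norm_eq_abs, abs_of_nonneg (Real.rpow_nonneg (hbdd 0 ω).1 p)]
    exact Real.rpow_le_rpow (hbdd 0 ω).1 (hbdd 0 ω).2 hp.le
  have hX0 : ∫⁻ ω, ENNReal.ofReal (X 0 ω ^ p) ∂P
      = ENNReal.ofReal (∫ ω, X 0 ω ^ p ∂P) :=
    (ofReal_integral_eq_lintegral_ofReal hint0
      (Filter.Eventually.of_forall fun ω => Real.rpow_nonneg (hbdd 0 ω).1 p)).symm
  induction n with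
  | zero => simp [Real.one_rpow]
  | succ n ih =>
    have hw0 : ∀ ω, 0 ≤ ∏ i ∈ Finset.range n, X i ω :=
      fun ω => Finset.prod_nonneg fun i _ => (hbdd i ω).1
    have hsplit : ∀ ω, ENNReal.ofReal ((∏ i ∈ Finset.range (n+1), X i ω) ^ p)
        = ENNReal.ofReal ((∏ i ∈ Finset.range n, X i ω) ^ p)
          * ENNReal.ofReal (X n ω ^ p) := by
      intro ω
      rw [Finset.prod_range_succ, Real.mul_rpow (hw0 ω) (hbdd n ω).1,
        ENNReal.ofReal_mul (Real.rpow_nonneg (hw0 ω) p)]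
    simp only [hsplit]
    have hind : IndepFun (∏ i ∈ Finset.range n, X i) (X n) P :=
      hindep.indepFun_prod_range_succ hmeas n
    have hind2 : IndepFun (fun ω => ENNReal.ofReal ((∏ i ∈ Finset.range n, X i ω) ^ p))
        (fun ω => ENNReal.ofReal (X n ω ^ p)) P := by
      have := hind.comp hφ hφ
      simpa [Function.comp_def, Finset.prod_apply] using this
    have hmul := lintegral_mul_eq_lintegral_mul_lintegral_of_indepFun (μ := P)
      (f := fun ω => ENNReal.ofReal ((∏ i ∈ Finset.range n, X i ω) ^ p))
      (g := fun ω => ENNReal.ofReal (X n ω ^ p))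
      (hφ.comp (Finset.measurable_prod _ fun i _ => hmeas i))
      (hφ.comp (hmeas n)) hind2
    simp only [Pi.mul_apply] at hmul
    rw [hmul, ih]
    have hXn : ∫⁻ ω, ENNReal.ofReal (X n ω ^ p) ∂P
        = ∫⁻ ω, ENNReal.ofReal (X 0 ω ^ p) ∂P := by
      have := ((hident n).comp hφ).lintegral_eq
      simpa [Function.comp_def] using this
    rw [hXn, hX0, pow_succ]
-- (∑' f)^q ≤ ∑' f^q for 0 < q ≤ 1
private lemma aux_tsum_rpow {f : ℕ → ℝ≥0∞} {q : ℝ} (hq0 : 0 < q) (hq1 : q ≤ 1) :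
    (∑' n, f n) ^ q ≤ ∑' n, (f n) ^ q := by
  have hfin : ∀ N, (∑ i ∈ Finset.range N, f i) ^ q ≤ ∑ i ∈ Finset.range N, (f i) ^ q := by
    intro N
    induction N with
    | zero => simp [ENNReal.zero_rpow_of_pos hq0]
    | succ N ih =>
      rw [Finset.sum_range_succ, Finset.sum_range_succ]
      exact le_trans (ENNReal.rpow_add_le_add_rpow _ _ hq0.le hq1) (add_le_add_left ih _)
  have htend : Tendsto (fun N => (∑ i ∈ Finset.range N, f i) ^ q) atTop
      (𝓝 ((∑' n, f n) ^ q)) :=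
    (ENNReal.continuous_rpow_const.tendsto _).comp (ENNReal.tendsto_nat_tsum f)
  exact le_of_tendsto' htend fun N => le_trans (hfin N) (ENNReal.sum_le_tsum _)

-- geometric tail bound
private lemma aux_geom_tail {g : ℕ → ℝ≥0∞} (hfin : ∀ n, g n ≠ ⊤) {r : ℝ}
    (hr0 : 0 ≤ r) (hr1 : r < 1) (N : ℕ) (hle : ∀ n, N ≤ n → g n ≤ ENNReal.ofReal (r ^ n)) :
    ∑' n, g n < ⊤ := by
  rw [← (ENNReal.summable : Summable (fun n => g (n + N))).sum_add_tsum_nat_add']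
  have hhead : ∑ i ∈ Finset.range N, g i < ⊤ :=
    ENNReal.sum_lt_top.mpr fun i _ => (hfin i).lt_top
  have htail : ∑' k, g (k + N) < ⊤ := by
    have hb : ∀ k, g (k + N) ≤ ENNReal.ofReal (r ^ N * r ^ k) := by
      intro k
      have := hle (k + N) (by omega)
      rwa [pow_add, mul_comm (r ^ k)] at this
    calc ∑' k, g (k + N) ≤ ∑' k, ENNReal.ofReal (r ^ N * r ^ k) :=
          ENNReal.tsum_le_tsum hb
      _ = ENNReal.ofReal (∑' k, r ^ N * r ^ k) := by
          rw [ENNReal.ofReal_tsum_of_nonneg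
            (fun k => mul_nonneg (pow_nonneg hr0 N) (pow_nonneg hr0 k))
            ((summable_geometric_of_lt_one hr0 hr1).mul_left _)]
      _ < ⊤ := ENNReal.ofReal_lt_top
  exact ENNReal.add_lt_top.mpr ⟨hhead, htail⟩

-- finite Minkowski
private lemma aux_minkowski {Ω : Type*} [MeasurableSpace Ω] (P : Measure Ω)
    {t : ℕ → Ω → ℝ≥0∞} (hmeas : ∀ n, Measurable (t n)) {q : ℝ} (hq1 : 1 ≤ q) (N : ℕ) :
    (∫⁻ ω, (∑ n ∈ Finset.range N, t n ω) ^ q ∂P) ^ (1/q)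
      ≤ ∑ n ∈ Finset.range N, (∫⁻ ω, t n ω ^ q ∂P) ^ (1/q) := by
  have hq0 : 0 < q := lt_of_lt_of_le zero_lt_one hq1
  induction N with
  | zero => simp [ENNReal.zero_rpow_of_pos hq0, hq0]
  | succ N ih =>
    have hmeasN : Measurable (fun ω => ∑ n ∈ Finset.range N, t n ω) :=
      Finset.measurable_sum _ fun i _ => hmeas i
    have key := ENNReal.lintegral_Lp_add_le (μ := P)
      (f := fun ω => ∑ n ∈ Finset.range N, t n ω) (g := t N)
      hmeasN.aemeasurable (hmeas N).aemeasurable hq1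
    simp only [Pi.add_apply] at key
    calc (∫⁻ ω, (∑ n ∈ Finset.range (N+1), t n ω) ^ q ∂P) ^ (1/q)
        = (∫⁻ ω, ((∑ n ∈ Finset.range N, t n ω) + t N ω) ^ q ∂P) ^ (1/q) := by
          simp_rw [Finset.sum_range_succ]
      _ ≤ (∫⁻ ω, (∑ n ∈ Finset.range N, t n ω) ^ q ∂P) ^ (1/q)
            + (∫⁻ ω, t N ω ^ q ∂P) ^ (1/q) := key
      _ ≤ (∑ n ∈ Finset.range N, (∫⁻ ω, t n ω ^ q ∂P) ^ (1/q))
            + (∫⁻ ω, t N ω ^ q ∂P) ^ (1/q) := add_le_add_left ih _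
      _ = ∑ n ∈ Finset.range (N+1), (∫⁻ ω, t n ω ^ q ∂P) ^ (1/q) := by
          rw [Finset.sum_range_succ]
-- almost-everywhere facts: positivity and SLLN
private lemma aux_ae {Ω : Type*} [MeasurableSpace Ω] (P : Measure Ω) [IsProbabilityMeasure P]
    (X : ℕ → Ω → ℝ)
    (hmeas : ∀ n, Measurable (X n))
    (hbdd : ∀ n ω, 0 ≤ X n ω)
    (hindep : iIndepFun X P)
    (hident : ∀ n, IdentDistrib (X n) (X 0) P P)
    (hzero : P {ω | X 0 ω = 0} = 0)
    (hint : Integrable (fun ω => Real.log (X 0 ω)) P) :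
    ∀ᵐ ω ∂P, (∀ n, 0 < X n ω) ∧
      Tendsto (fun n : ℕ => (∑ i ∈ Finset.range n, Real.log (X i ω)) / n) atTop
        (𝓝 (∫ ω, Real.log (X 0 ω) ∂P)) := by
  have h1 : ∀ n, P {ω | X n ω = 0} = 0 := by
    intro n
    have heq : {ω | X n ω = 0} = X n ⁻¹' {0} := rfl
    rw [heq, ← Measure.map_apply (hmeas n) (measurableSet_singleton 0), (hident n).map_eq,
      Measure.map_apply (hmeas 0) (measurableSet_singleton 0)]
    exact hzero
  have hpos : ∀ᵐ ω ∂P, ∀ n, 0 < X n ω := by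
    rw [ae_all_iff]
    intro n
    rw [ae_iff]
    refine measure_mono_null (fun ω hω => ?_) (h1 n)
    simp only [Set.mem_setOf_eq, not_lt] at hω ⊢
    exact le_antisymm hω (hbdd n ω)
  have hpair : Pairwise (Function.onFun (IndepFun · · P) fun i ω => Real.log (X i ω)) := by
    intro i j hij
    have := (hindep.indepFun hij).comp Real.measurable_log Real.measurable_log
    simpa [Function.comp_def] using this
  have hid : ∀ i, IdentDistrib (fun ω => Real.log (X i ω)) (fun ω => Real.log (X 0 ω)) P P := by
    intro i
    have := (hident i).comp Real.measurable_log
    simpa [Function.comp_def] using this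
  have hslln := strong_law_ae_real (fun i ω => Real.log (X i ω)) hint hpair hid
  exact hpos.and hslln
-- PART A
private lemma part_a {Ω : Type*} [MeasurableSpace Ω] (P : Measure Ω) [IsProbabilityMeasure P]
    (X : ℕ → Ω → ℝ) (C : ℝ)
    (hmeas : ∀ n, Measurable (X n))
    (hbdd : ∀ n ω, 0 ≤ X n ω ∧ X n ω ≤ C)
    (hindep : iIndepFun X P)
    (hident : ∀ n, IdentDistrib (X n) (X 0) P P)
    (hzero : P {ω | X 0 ω = 0} = 0)
    (hint : Integrable (fun ω => Real.log (X 0 ω)) P)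
    (a : ℕ → ℂ) (γ : ℝ≥0∞)
    (hγ : γ = Filter.liminf
      (fun n : ℕ => ENNReal.ofReal (‖a n‖) ^ (-(1 : ℝ) / (n : ℝ))) atTop)
    (S : Ω → ℝ≥0∞)
    (hS : ∀ ω, S ω =
      ∑' n : ℕ, ENNReal.ofReal
        (‖a n‖ ^ 2 * (∏ i ∈ Finset.range n, X i ω) ^ 2))
    (h : γ < ENNReal.ofReal (Real.exp (∫ ω, Real.log (X 0 ω) ∂P))) :
    P {ω | S ω < ⊤} = 0 := by
  obtain ⟨t, ht0, htb, hfreq⟩ := aux_freq hγ h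
  obtain ⟨c, hc1, hc2⟩ := exists_between htb
  have hc0 : 0 < c := ht0.trans hc1
  have hae := aux_ae P X hmeas (fun n ω => (hbdd n ω).1) hindep hident hzero hint
  have hStop : ∀ᵐ ω ∂P, S ω = ⊤ := by
    filter_upwards [hae] with ω hω
    obtain ⟨hpos, htend⟩ := hω
    obtain ⟨N, hN⟩ := eventually_atTop.mp (aux_grow_down hpos htend hc0 hc2)
    by_contra hne
    have hq : 1 < ((c / t) ^ 2 : ℝ) := one_lt_pow₀ ((one_lt_div ht0).mpr hc1) two_ne_zero
    have htt : Tendsto (fun n : ℕ => (((c/t):ℝ)^2) ^ n) atTop atTop :=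
      tendsto_pow_atTop_atTop_of_one_lt hq
    obtain ⟨N2, hN2⟩ := eventually_atTop.mp (htt.eventually_ge_atTop ((S ω).toReal + 1))
    obtain ⟨n, hn, hn1, hRn⟩ := (frequently_atTop.mp hfreq) (max N N2)
    have hw : c ^ n ≤ ∏ i ∈ Finset.range n, X i ω := hN n (le_trans (le_max_left _ _) hn)
    have hterm : ENNReal.ofReal ((((c/t):ℝ)^2)^n) ≤ S ω := by
      rw [hS ω]
      refine le_trans (ENNReal.ofReal_le_ofReal ?_) (ENNReal.le_tsum n)
      have halg : ((((c/t):ℝ)^2)^n) = ((t^n)⁻¹)^2 * (c^n)^2 := by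
        ring
      rw [halg]
      have h1 : (((t^n)⁻¹)^2 : ℝ) ≤ ‖a n‖ ^ 2 :=
        pow_le_pow_left₀ (by positivity) hRn.le 2
      have h2 : ((c^n)^2 : ℝ) ≤ (∏ i ∈ Finset.range n, X i ω) ^ 2 :=
        pow_le_pow_left₀ (by positivity) hw 2
      exact mul_le_mul h1 h2 (by positivity) (by positivity)
    have hlt : S ω < ENNReal.ofReal ((((c/t):ℝ)^2)^n) := by
      rw [ENNReal.lt_ofReal_iff_toReal_lt hne]
      have := hN2 n (le_trans (le_max_right _ _) hn)
      linarith
    exact lt_irrefl _ (hlt.trans_le hterm)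
  exact measure_mono_null (fun ω (hω : S ω < ⊤) => hω.ne) (ae_iff.mp hStop)
-- PART B
private lemma part_b {Ω : Type*} [MeasurableSpace Ω] (P : Measure Ω) [IsProbabilityMeasure P]
    (X : ℕ → Ω → ℝ) (C : ℝ)
    (hmeas : ∀ n, Measurable (X n))
    (hbdd : ∀ n ω, 0 ≤ X n ω ∧ X n ω ≤ C)
    (hindep : iIndepFun X P)
    (hident : ∀ n, IdentDistrib (X n) (X 0) P P)
    (hzero : P {ω | X 0 ω = 0} = 0)
    (hint : Integrable (fun ω => Real.log (X 0 ω)) P)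
    (a : ℕ → ℂ) (γ : ℝ≥0∞)
    (hγ : γ = Filter.liminf
      (fun n : ℕ => ENNReal.ofReal (‖a n‖) ^ (-(1 : ℝ) / (n : ℝ))) atTop)
    (S : Ω → ℝ≥0∞)
    (hS : ∀ ω, S ω =
      ∑' n : ℕ, ENNReal.ofReal
        (‖a n‖ ^ 2 * (∏ i ∈ Finset.range n, X i ω) ^ 2))
    (h : ENNReal.ofReal (Real.exp (∫ ω, Real.log (X 0 ω) ∂P)) < γ) :
    P {ω | S ω < ⊤} = 1 := by
  obtain ⟨t, ht0, htb, hev⟩ := aux_ev hγ (Real.exp_pos _).le h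
  obtain ⟨c, hc1, hc2⟩ := exists_between htb
  have hc0 : 0 < c := (Real.exp_pos _).trans hc1
  set q : ℝ := (c/t)^2 with hqdef
  have hq0 : 0 ≤ q := by positivity
  have hq1 : q < 1 := pow_lt_one₀ (by positivity) ((div_lt_one ht0).mpr hc2) two_ne_zero
  have hae := aux_ae P X hmeas (fun n ω => (hbdd n ω).1) hindep hident hzero hint
  have hfin : ∀ᵐ ω ∂P, S ω < ⊤ := by
    filter_upwards [hae] with ω hω
    obtain ⟨hpos, htend⟩ := hω
    obtain ⟨N1, hN1⟩ := eventually_atTop.mp hev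
    obtain ⟨N2, hN2⟩ := eventually_atTop.mp (aux_grow_up hpos htend hc1)
    have hsum : Summable (fun n => ‖a n‖^2 * (∏ i ∈ Finset.range n, X i ω)^2) := by
      rw [← summable_nat_add_iff (max N1 N2)]
      have hgeo : Summable (fun k : ℕ => q^(k + max N1 N2)) := by
        simpa [pow_add] using (summable_geometric_of_lt_one hq0 hq1).mul_right (q ^ max N1 N2)
      refine Summable.of_nonneg_of_le (fun k => by positivity) (fun k => ?_) hgeo
      set n := k + max N1 N2 with hndef
      have hR : ‖a n‖ ≤ (t^n)⁻¹ :=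
        (hN1 n ((le_max_left N1 N2).trans (Nat.le_add_left _ k))).le
      have hw : (∏ i ∈ Finset.range n, X i ω) ≤ c ^ n :=
        hN2 n ((le_max_right N1 N2).trans (Nat.le_add_left _ k))
      have halg : (q^n : ℝ) = ((t^n)⁻¹)^2 * (c^n)^2 := by
        rw [hqdef]; ring
      rw [halg]
      exact mul_le_mul (pow_le_pow_left₀ (norm_nonneg _) hR 2)
        (pow_le_pow_left₀ (Finset.prod_nonneg fun i _ => (hbdd i ω).1) hw 2)
        (by positivity) (by positivity)
    rw [hS ω, ← ENNReal.ofReal_tsum_of_nonneg (fun n => by positivity) hsum]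
    exact ENNReal.ofReal_lt_top
  have h0 : P {ω | ¬ S ω < ⊤} = 0 := ae_iff.mp hfin
  refine le_antisymm prob_le_one ?_
  calc (1:ℝ≥0∞) = P Set.univ := measure_univ.symm
    _ ≤ P ({ω | S ω < ⊤} ∪ {ω | ¬ S ω < ⊤}) := measure_mono (by
        intro ω _
        by_cases hω : S ω < ⊤
        · exact Or.inl hω
        · exact Or.inr hω)
    _ ≤ P {ω | S ω < ⊤} + P {ω | ¬ S ω < ⊤} := measure_union_le _ _
    _ = P {ω | S ω < ⊤} := by rw [h0, add_zero]
private lemma aux_pow_rpow {t : ℝ} (ht : 0 ≤ t) (p : ℝ) (n : ℕ) :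
    ((t ^ n : ℝ)) ^ p = (t ^ p) ^ n := by
  rw [← Real.rpow_natCast t n, ← Real.rpow_mul ht, mul_comm ((n:ℝ)) p,
    Real.rpow_mul ht, Real.rpow_natCast]

-- PART C
private lemma part_c {Ω : Type*} [MeasurableSpace Ω] (P : Measure Ω) [IsProbabilityMeasure P]
    (X : ℕ → Ω → ℝ) (C : ℝ)
    (hmeas : ∀ n, Measurable (X n))
    (hbdd : ∀ n ω, 0 ≤ X n ω ∧ X n ω ≤ C)
    (hindep : iIndepFun X P)
    (hident : ∀ n, IdentDistrib (X n) (X 0) P P)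
    (a : ℕ → ℂ) (γ : ℝ≥0∞)
    (hγ : γ = Filter.liminf
      (fun n : ℕ => ENNReal.ofReal (‖a n‖) ^ (-(1 : ℝ) / (n : ℝ))) atTop)
    (S : Ω → ℝ≥0∞)
    (hS : ∀ ω, S ω =
      ∑' n : ℕ, ENNReal.ofReal
        (‖a n‖ ^ 2 * (∏ i ∈ Finset.range n, X i ω) ^ 2))
    (p : ℝ) (hp : 1 ≤ p) :
    (γ < ENNReal.ofReal ((∫ ω, X 0 ω ^ p ∂P) ^ (1 / p)) →
        ∫⁻ ω, S ω ^ (p / 2) ∂P = ⊤) ∧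
    (ENNReal.ofReal ((∫ ω, X 0 ω ^ p ∂P) ^ (1 / p)) < γ →
        ∫⁻ ω, S ω ^ (p / 2) ∂P < ⊤) := by
  have hp0 : 0 < p := lt_of_lt_of_le zero_lt_one hp
  have hq0 : 0 < p / 2 := by positivity
  set m : ℝ := ∫ ω, X 0 ω ^ p ∂P with hmdef
  have hm0 : 0 ≤ m := integral_nonneg fun ω => Real.rpow_nonneg (hbdd 0 ω).1 p
  set M : ℝ≥0∞ := ENNReal.ofReal m with hMdef
  -- the summands
  set T : ℕ → Ω → ℝ≥0∞ := fun n ω =>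
    ENNReal.ofReal (‖a n‖ ^ 2 * (∏ i ∈ Finset.range n, X i ω) ^ 2) with hTdef
  have hTmeas : ∀ n, Measurable (T n) := by
    intro n
    exact (measurable_const.mul
      ((Finset.measurable_prod (Finset.range n) fun i _ => hmeas i).pow_const 2)).ennreal_ofReal
  have hw0 : ∀ n ω, 0 ≤ ∏ i ∈ Finset.range n, X i ω :=
    fun n ω => Finset.prod_nonneg fun i _ => (hbdd i ω).1
  -- rpow of summands
  have htq : ∀ n ω, (T n ω) ^ (p / 2)
      = ENNReal.ofReal (‖a n‖ ^ p)
        * ENNReal.ofReal ((∏ i ∈ Finset.range n, X i ω) ^ p) := by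
    intro n ω
    rw [hTdef]
    rw [ENNReal.ofReal_rpow_of_nonneg (by positivity) hq0.le]
    rw [Real.mul_rpow (by positivity) (by positivity)]
    have h1 : (‖a n‖ ^ (2:ℕ) : ℝ) ^ (p/2) = ‖a n‖ ^ p := by
      rw [aux_pow_rpow (norm_nonneg _) (p/2) 2, ← Real.rpow_natCast _ 2,
        ← Real.rpow_mul (norm_nonneg _),
        show ((p/2) * ((2:ℕ):ℝ)) = p by push_cast; ring]
    have h2 : ((∏ i ∈ Finset.range n, X i ω) ^ (2:ℕ) : ℝ) ^ (p/2)
        = (∏ i ∈ Finset.range n, X i ω) ^ p := by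
      rw [aux_pow_rpow (hw0 n ω) (p/2) 2, ← Real.rpow_natCast _ 2,
        ← Real.rpow_mul (hw0 n ω),
        show ((p/2) * ((2:ℕ):ℝ)) = p by push_cast; ring]
    rw [h1, h2, ENNReal.ofReal_mul (Real.rpow_nonneg (norm_nonneg _) _)]
  have hlint : ∀ n, ∫⁻ ω, (T n ω) ^ (p / 2) ∂P
      = ENNReal.ofReal (‖a n‖ ^ p) * M ^ n := by
    intro n
    simp_rw [htq n]
    rw [lintegral_const_mul _ ((Finset.measurable_prod (Finset.range n)
      fun i _ => hmeas i).pow_const p).ennreal_ofReal]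
    rw [aux_moment P X C hmeas hbdd hindep hident hp0 n]
  have hlintfin : ∀ n, ∫⁻ ω, (T n ω) ^ (p / 2) ∂P ≠ ⊤ := by
    intro n
    rw [hlint n]
    exact ENNReal.mul_ne_top ENNReal.ofReal_ne_top (ENNReal.pow_ne_top ENNReal.ofReal_ne_top)
  constructor
  · -- divergence
    intro hlt
    obtain ⟨r, hr0, hrb, hfreq⟩ := aux_freq hγ hlt
    have hrp : r ^ p < m := by
      calc r ^ p < (m ^ (1/p)) ^ p := Real.rpow_lt_rpow hr0.le hrb hp0
        _ = m := by
          rw [← Real.rpow_mul hm0, one_div, inv_mul_cancel₀ hp0.ne', Real.rpow_one]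
    set k : ℝ := m / r ^ p with hkdef
    have hk1 : 1 < k := (one_lt_div (Real.rpow_pos_of_pos hr0 p)).mpr hrp
    by_contra hne
    have key : ∀ n, (r ^ n)⁻¹ < ‖a n‖
        → ENNReal.ofReal (k ^ n) ≤ ∫⁻ ω, S ω ^ (p / 2) ∂P := by
      intro n hRn
      calc ENNReal.ofReal (k ^ n) = ENNReal.ofReal (((r ^ n)⁻¹) ^ p * m ^ n) := by
            rw [aux_alg hr0 hm0 p n]
        _ = ENNReal.ofReal (((r ^ n)⁻¹) ^ p) * ENNReal.ofReal (m ^ n) :=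
            ENNReal.ofReal_mul (Real.rpow_nonneg (by positivity) _)
        _ ≤ ENNReal.ofReal (‖a n‖ ^ p) * M ^ n := by
            rw [hMdef, ← ENNReal.ofReal_pow hm0]
            exact mul_le_mul_left (ENNReal.ofReal_le_ofReal
              (Real.rpow_le_rpow (by positivity) hRn.le hp0.le)) _
        _ = ∫⁻ ω, (T n ω) ^ (p / 2) ∂P := (hlint n).symm
        _ ≤ ∫⁻ ω, S ω ^ (p / 2) ∂P := by
            refine lintegral_mono fun ω => ENNReal.rpow_le_rpow ?_ hq0.le
            rw [hS ω]
            exact ENNReal.le_tsum n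
    have htt : Tendsto (fun n : ℕ => k ^ n) atTop atTop :=
      tendsto_pow_atTop_atTop_of_one_lt hk1
    obtain ⟨N2, hN2⟩ := eventually_atTop.mp
      (htt.eventually_ge_atTop ((∫⁻ ω, S ω ^ (p / 2) ∂P).toReal + 1))
    obtain ⟨n, hn, hn1, hRn⟩ := (frequently_atTop.mp hfreq) N2
    have h1 := key n hRn
    have h2 : ∫⁻ ω, S ω ^ (p / 2) ∂P < ENNReal.ofReal (k ^ n) := by
      rw [ENNReal.lt_ofReal_iff_toReal_lt hne]
      have := hN2 n hn
      linarith
    exact lt_irrefl _ (h2.trans_le h1)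
  · -- convergence
    intro hgt
    obtain ⟨t, ht0, htb, hev⟩ := aux_ev hγ (Real.rpow_nonneg hm0 _) hgt
    have hmt : m < t ^ p := by
      calc m = (m ^ (1/p)) ^ p := by
            rw [← Real.rpow_mul hm0, one_div, inv_mul_cancel₀ hp0.ne', Real.rpow_one]
        _ < t ^ p := Real.rpow_lt_rpow (Real.rpow_nonneg hm0 _) htb hp0
    set kr : ℝ := m / t ^ p with hkrdef
    have hkr0 : 0 ≤ kr := div_nonneg hm0 (Real.rpow_pos_of_pos ht0 p).le
    have hkr1 : kr < 1 := (div_lt_one (Real.rpow_pos_of_pos ht0 p)).mpr hmt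
    obtain ⟨N, hN⟩ := eventually_atTop.mp hev
    have cbound : ∀ n, N ≤ n →
        ∫⁻ ω, (T n ω) ^ (p / 2) ∂P ≤ ENNReal.ofReal (kr ^ n) := by
      intro n hn
      rw [hlint n, hMdef, ← ENNReal.ofReal_pow hm0, ← ENNReal.ofReal_mul
        (Real.rpow_nonneg (norm_nonneg _) _), ← aux_alg ht0 hm0 p n]
      apply ENNReal.ofReal_le_ofReal
      exact mul_le_mul_of_nonneg_right
        (Real.rpow_le_rpow (norm_nonneg _) (hN n hn).le hp0.le)
        (pow_nonneg hm0 n)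
    rcases le_or_gt p 2 with hp2 | hp2
    · -- p ≤ 2 : termwise
      have hq1 : p / 2 ≤ 1 := by linarith
      have step1 : ∫⁻ ω, S ω ^ (p / 2) ∂P ≤ ∑' n, ∫⁻ ω, (T n ω) ^ (p / 2) ∂P := by
        calc ∫⁻ ω, S ω ^ (p / 2) ∂P ≤ ∫⁻ ω, ∑' n, (T n ω) ^ (p / 2) ∂P := by
              refine lintegral_mono fun ω => ?_
              rw [hS ω]
              exact aux_tsum_rpow hq0 hq1
          _ = ∑' n, ∫⁻ ω, (T n ω) ^ (p / 2) ∂P :=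
              lintegral_tsum fun n =>
                ((ENNReal.continuous_rpow_const.measurable).comp (hTmeas n)).aemeasurable
      exact lt_of_le_of_lt step1 (aux_geom_tail hlintfin hkr0 hkr1 N cbound)
    · -- p ≥ 2 : Minkowski
      have hq1 : 1 ≤ p / 2 := by linarith
      set d : ℕ → ℝ≥0∞ := fun n => (∫⁻ ω, (T n ω) ^ (p / 2) ∂P) ^ (1 / (p/2)) with hddef
      set s : ℝ := kr ^ (1 / (p/2)) with hsdef
      have hs0 : 0 ≤ s := Real.rpow_nonneg hkr0 _
      have hs1 : s < 1 := Real.rpow_lt_one hkr0 hkr1 (by positivity)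
      have hdbound : ∀ n, N ≤ n → d n ≤ ENNReal.ofReal (s ^ n) := by
        intro n hn
        rw [hddef]
        calc (∫⁻ ω, (T n ω) ^ (p / 2) ∂P) ^ (1 / (p/2))
            ≤ (ENNReal.ofReal (kr ^ n)) ^ (1 / (p/2)) :=
              ENNReal.rpow_le_rpow (cbound n hn) (by positivity)
          _ = ENNReal.ofReal (s ^ n) := by
              rw [ENNReal.ofReal_rpow_of_nonneg (pow_nonneg hkr0 n) (by positivity),
                aux_pow_rpow hkr0 (1/(p/2)) n]
      have hdfin : ∀ n, d n ≠ ⊤ :=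
        fun n => ENNReal.rpow_ne_top_of_nonneg (by positivity) (hlintfin n)
      have hB : ∑' n, d n < ⊤ := aux_geom_tail hdfin hs0 hs1 N hdbound
      have hbound : ∀ N' : ℕ,
          ∫⁻ ω, (∑ n ∈ Finset.range N', T n ω) ^ (p / 2) ∂P ≤ (∑' n, d n) ^ (p/2) := by
        intro N'
        have h1 := aux_minkowski P hTmeas hq1 N'
        have h2 : (∫⁻ ω, (∑ n ∈ Finset.range N', T n ω) ^ (p / 2) ∂P) ^ (1/(p/2))
            ≤ ∑' n, d n :=
          le_trans h1 (ENNReal.sum_le_tsum _)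
        have h3 := ENNReal.rpow_le_rpow h2 hq0.le
        rwa [← ENNReal.rpow_mul, one_div, inv_mul_cancel₀ hq0.ne', ENNReal.rpow_one] at h3
      have hmct : Tendsto (fun N' => ∫⁻ ω, (∑ n ∈ Finset.range N', T n ω) ^ (p / 2) ∂P)
          atTop (𝓝 (∫⁻ ω, S ω ^ (p / 2) ∂P)) := by
        refine lintegral_tendsto_of_tendsto_of_monotone
          (fun N' => (((ENNReal.continuous_rpow_const.measurable).comp
            (Finset.measurable_sum _ fun n _ => hTmeas n))).aemeasurable)
          ?_ ?_
        · filter_upwards with ω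
          intro i j hij
          exact ENNReal.rpow_le_rpow (Finset.sum_le_sum_of_subset
            (Finset.range_subset_range.mpr hij)) hq0.le
        · filter_upwards with ω
          rw [hS ω]
          exact (ENNReal.continuous_rpow_const.tendsto _).comp
            (ENNReal.tendsto_nat_tsum fun n => T n ω)
      have hfinal : ∫⁻ ω, S ω ^ (p / 2) ∂P ≤ (∑' n, d n) ^ (p/2) :=
        le_of_tendsto' hmct hbound
      exact lt_of_le_of_lt hfinal
        (ENNReal.rpow_lt_top_of_nonneg hq0.le hB.ne)

end AuxiliaryLemmas

/-- membership of a power series in the random Hardy space, in terms of the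
radius of convergence `γ = liminf |a_n|^{-1/n}` compared with `exp E[ln X_1]`, and finiteness
of the moments `E[S^{p/2}]` in terms of `γ` compared with `(E[X_1^p])^{1/p}`. -/
theorem stmt_11
    {Ω : Type*} [MeasurableSpace Ω] (P : Measure Ω) [IsProbabilityMeasure P]
    (X : ℕ → Ω → ℝ) (C : ℝ)
    (hmeas : ∀ n, Measurable (X n))
    (hbdd : ∀ n ω, 0 ≤ X n ω ∧ X n ω ≤ C)
    (hindep : iIndepFun X P)
    (hident : ∀ n, IdentDistrib (X n) (X 0) P P)
    (hzero : P {ω | X 0 ω = 0} = 0)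
    (hint : Integrable (fun ω => Real.log (X 0 ω)) P)
    (a : ℕ → ℂ)
    (γ : ℝ≥0∞)
    (hγ : γ = Filter.liminf
      (fun n : ℕ => ENNReal.ofReal (‖a n‖) ^ (-(1 : ℝ) / (n : ℝ))) atTop)
    (S : Ω → ℝ≥0∞)
    (hS : ∀ ω, S ω =
      ∑' n : ℕ, ENNReal.ofReal
        (‖a n‖ ^ 2 * (∏ i ∈ Finset.range n, X i ω) ^ 2)) :
    (γ < ENNReal.ofReal (Real.exp (∫ ω, Real.log (X 0 ω) ∂P)) → P {ω | S ω < ⊤} = 0) ∧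
    (ENNReal.ofReal (Real.exp (∫ ω, Real.log (X 0 ω) ∂P)) < γ → P {ω | S ω < ⊤} = 1) ∧
    (∀ p : ℝ, 1 ≤ p →
      (γ < ENNReal.ofReal ((∫ ω, X 0 ω ^ p ∂P) ^ (1 / p)) →
        ∫⁻ ω, S ω ^ (p / 2) ∂P = ⊤) ∧
      (ENNReal.ofReal ((∫ ω, X 0 ω ^ p ∂P) ^ (1 / p)) < γ →
        ∫⁻ ω, S ω ^ (p / 2) ∂P < ⊤)) := by
  refine ⟨part_a P X C hmeas hbdd hindep hident hzero hint a γ hγ S hS,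
    part_b P X C hmeas hbdd hindep hident hzero hint a γ hγ S hS,
    fun p hp => part_c P X C hmeas hbdd hindep hident a γ hγ S hS p hp⟩

end
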